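/- Let d ≥ 1, K ≥ 1, N ≥ 1, η > 0, let c : Fin N → Fin K be a labeling of rounds by histories, and let ℓ̂_1, …, ℓ̂_N : Fin d → ℝ be loss vectors with ℓ̂_n(a) ≥ 0 for all n and a. For each round n define x_n(a) = exp( −η·∑_{j < n, c(j) = c(n)} ℓ̂_j(a) ) / ∑_b exp( −η·∑_{j < n, c(j) = c(n)} ℓ̂_j(b) ), i.e., exponential weights run separately on each label class. Then for every assignment z : Fin K → Fin d of a comparator action to each label: ∑_{n=1}^N ⟨ℓ̂_n, x_n⟩ ≤ ∑_{n=1}^N ℓ̂_n( z(c(n)) ) + η·∑_{n=1}^N ⟨ℓ̂_n², x_n⟩ + K·(log d)/η, where ℓ̂_n² denotes the componentwise square of ℓ̂_n. (Deterministic per-history decomposition at the core of the paper's Theorem 2.) -/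

import Mathlib

/-!
On each label class the strategy is plain exponential weights, so it suffices to bound the
regret of exponential weights on one class and sum over the `K` classes. For one class, the
potential `Φ = log ∑ₐ exp (-η · cumulative loss of a)` starts at `log d`, grows by at most
`-η⟨ℓ, x⟩ + η²⟨ℓ², x⟩` in a round with loss `ℓ` and weights `x` (by `e⁻ᵗ ≤ 1 - t + t²` for
`t ≥ 0` and `log T ≤ T - 1`), and ends above `-η` times the cumulative loss of any fixed action.
-/

open Finset Real

theorem Real.exp_neg_le_one_sub_add_sq {t : ℝ} (ht : 0 ≤ t) : exp (-t) ≤ 1 - t + t ^ 2 := by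
  have hmul : exp (-t) * exp t = 1 := by rw [← exp_add, neg_add_cancel, exp_zero]
  nlinarith [add_one_le_exp t, exp_pos (-t), exp_pos t]

theorem Real.le_log_sum_exp {α : Type*} [Fintype α] (f : α → ℝ) (b : α) :
    f b ≤ log (∑ a, exp (f a)) := by
  rw [← log_exp (f b)]
  exact log_le_log (exp_pos _) (single_le_sum (fun a _ => (exp_pos (f a)).le) (mem_univ b))

section ExpWeights

variable {α : Type*} [Fintype α]

noncomputable def expWeights (η : ℝ) (S : α → ℝ) (a : α) : ℝ :=
  exp (-η * S a) / ∑ b, exp (-η * S b)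

variable [Nonempty α] (η : ℝ) (S : α → ℝ)

theorem sum_exp_pos : 0 < ∑ b, exp (-η * S b) :=
  sum_pos (fun _ _ => exp_pos _) univ_nonempty

theorem expWeights_pos (a : α) : 0 < expWeights η S a :=
  div_pos (exp_pos _) (sum_exp_pos η S)

theorem sum_expWeights : ∑ a, expWeights η S a = 1 := by
  simp only [expWeights]
  rw [← sum_div, div_self (sum_exp_pos η S).ne']

variable {η}

theorem sum_expWeights_mul_exp_le (hη : 0 ≤ η) {ℓ : α → ℝ} (hℓ : ∀ a, 0 ≤ ℓ a) :
    ∑ a, expWeights η S a * exp (-η * ℓ a)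
      ≤ 1 - η * ∑ a, ℓ a * expWeights η S a + η ^ 2 * ∑ a, ℓ a ^ 2 * expWeights η S a := by
  calc ∑ a, expWeights η S a * exp (-η * ℓ a)
      ≤ ∑ a, expWeights η S a * (1 - η * ℓ a + (η * ℓ a) ^ 2) := by
        gcongr with a
        · exact (expWeights_pos η S a).le
        · rw [neg_mul]
          exact exp_neg_le_one_sub_add_sq (mul_nonneg hη (hℓ a))
    _ = ∑ a, expWeights η S a - η * ∑ a, ℓ a * expWeights η S a
          + η ^ 2 * ∑ a, ℓ a ^ 2 * expWeights η S a := by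
        simp only [mul_sum, ← sum_sub_distrib, ← sum_add_distrib]
        exact sum_congr rfl fun a _ => by ring
    _ = _ := by rw [sum_expWeights]

theorem log_sum_exp_add_le (hη : 0 ≤ η) {ℓ : α → ℝ} (hℓ : ∀ a, 0 ≤ ℓ a) :
    log (∑ a, exp (-η * (S a + ℓ a)))
      ≤ log (∑ a, exp (-η * S a))
        - η * ∑ a, ℓ a * expWeights η S a + η ^ 2 * ∑ a, ℓ a ^ 2 * expWeights η S a := by
  set T := ∑ a, expWeights η S a * exp (-η * ℓ a)
  have hT : 0 < T := sum_pos (fun a _ => mul_pos (expWeights_pos η S a) (exp_pos _)) univ_nonempty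
  have hfactor : ∑ a, exp (-η * (S a + ℓ a)) = (∑ a, exp (-η * S a)) * T := by
    simp only [T, mul_sum, expWeights, mul_add, exp_add]
    refine sum_congr rfl fun a _ => ?_
    field_simp [(sum_exp_pos η S).ne']
  rw [hfactor, log_mul (sum_exp_pos η S).ne' hT.ne']
  linarith [log_le_sub_one_of_pos hT, sum_expWeights_mul_exp_le S hη hℓ]

end ExpWeights

section Hedge

variable {ι α : Type*} [LinearOrder ι] [Fintype α] {η : ℝ} (L : ι → α → ℝ)

theorem log_sum_exp_sum_le [Nonempty α] (hη : 0 ≤ η) (hL : ∀ n a, 0 ≤ L n a) (s : Finset ι) :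
    log (∑ a, exp (-η * ∑ n ∈ s, L n a))
      ≤ log (Fintype.card α) + ∑ n ∈ s,
        (-η * ∑ a, L n a * expWeights η (fun b => ∑ j ∈ s with j < n, L j b) a
          + η ^ 2 * ∑ a, L n a ^ 2 * expWeights η (fun b => ∑ j ∈ s with j < n, L j b) a) := by
  induction s using Finset.induction_on_max with
  | empty => simp
  | insert m s hlt ih =>
    have hm : m ∉ s := fun h => lt_irrefl m (hlt m h)
    have hbefore_m : ({j ∈ insert m s | j < m} : Finset ι) = s := by
      rw [filter_insert, if_neg (lt_irrefl m), filter_true_of_mem hlt]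
    have hbefore : ∀ n ∈ s, ({j ∈ insert m s | j < n} : Finset ι) = {j ∈ s | j < n} := by
      intro n hn
      rw [filter_insert, if_neg (hlt n hn).not_gt]
    simp +contextual only [sum_insert hm, hbefore_m, hbefore, add_comm (L m _)]
    linarith [log_sum_exp_add_le (fun a => ∑ n ∈ s, L n a) hη (hL m)]

theorem hedge_loss_le (hη : 0 < η) (hL : ∀ n a, 0 ≤ L n a) (s : Finset ι)
    (x : ι → α → ℝ) (hx : ∀ n ∈ s, x n = expWeights η (fun b => ∑ j ∈ s with j < n, L j b))
    (b : α) :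
    ∑ n ∈ s, ∑ a, L n a * x n a
      ≤ ∑ n ∈ s, L n b + η * ∑ n ∈ s, ∑ a, L n a ^ 2 * x n a + log (Fintype.card α) / η := by
  have : Nonempty α := ⟨b⟩
  have hlower := le_log_sum_exp (fun a => -η * ∑ n ∈ s, L n a) b
  have hupper := log_sum_exp_sum_le L hη.le hL s
  simp +contextual only [← hx, sum_add_distrib, ← mul_sum] at hupper
  refine le_of_mul_le_mul_left ?_ hη
  rw [mul_add, mul_add, mul_div_cancel₀ _ hη.ne']
  linarith

end Hedge

theorem stmt_10_general (d K N : ℕ)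
    (η : ℝ) (hη : 0 < η)
    (c : Fin N → Fin K) (L : Fin N → Fin d → ℝ) (hL : ∀ n a, 0 ≤ L n a)
    (x : Fin N → Fin d → ℝ)
    (hx : ∀ n a, x n a =
      Real.exp (-η * ∑ j ∈ Finset.univ.filter (fun j => j < n ∧ c j = c n), L j a)
        / ∑ b : Fin d,
            Real.exp (-η * ∑ j ∈ Finset.univ.filter (fun j => j < n ∧ c j = c n), L j b))
    (z : Fin K → Fin d) :
    ∑ n : Fin N, ∑ a : Fin d, L n a * x n a
      ≤ ∑ n : Fin N, L n (z (c n))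
        + η * ∑ n : Fin N, ∑ a : Fin d, (L n a) ^ 2 * x n a
        + K * Real.log d / η := by
  have hclass_weights : ∀ k, ∀ n ∈ ({n | c n = k} : Finset (Fin N)),
      x n = expWeights η (fun b => ∑ j ∈ {j ∈ {j | c j = k} | j < n}, L j b) := by
    intro k n hn
    obtain rfl := (mem_filter.1 hn).2
    funext a
    rw [hx, expWeights, filter_filter, filter_congr fun j _ => and_comm]
  have hclass_comparator : ∀ k, ∑ n ∈ ({n | c n = k} : Finset (Fin N)), L n (z k)
      = ∑ n ∈ ({n | c n = k} : Finset (Fin N)), L n (z (c n)) :=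
    fun k => sum_congr rfl fun n hn => by rw [(mem_filter.1 hn).2]
  calc ∑ n, ∑ a, L n a * x n a
      = ∑ k, ∑ n ∈ ({n | c n = k} : Finset (Fin N)), ∑ a, L n a * x n a :=
        (sum_fiberwise univ c _).symm
    _ ≤ ∑ k, (∑ n ∈ ({n | c n = k} : Finset (Fin N)), L n (z (c n))
          + η * ∑ n ∈ ({n | c n = k} : Finset (Fin N)), ∑ a, L n a ^ 2 * x n a
          + log (Fintype.card (Fin d)) / η) := by
        gcongr with k
        rw [← hclass_comparator]
        exact hedge_loss_le L hη hL _ x (hclass_weights k) (z k)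
    _ = _ := by
        simp only [sum_add_distrib, ← mul_sum, sum_fiberwise, sum_const, card_univ,
          Fintype.card_fin, nsmul_eq_mul]
        ring

/-- Deterministic per-history decomposition at the core of the paper's Theorem 2:
exponential weights run separately on each label class, compared against a
per-label comparator action. -/
theorem stmt_10 (d K N : ℕ) (hd : 1 ≤ d) (hK : 1 ≤ K) (hN : 1 ≤ N)
    (η : ℝ) (hη : 0 < η)
    (c : Fin N → Fin K) (L : Fin N → Fin d → ℝ) (hL : ∀ n a, 0 ≤ L n a)
    (x : Fin N → Fin d → ℝ)
    (hx : ∀ n a, x n a =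
      Real.exp (-η * ∑ j ∈ Finset.univ.filter (fun j => j < n ∧ c j = c n), L j a)
        / ∑ b : Fin d,
            Real.exp (-η * ∑ j ∈ Finset.univ.filter (fun j => j < n ∧ c j = c n), L j b))
    (z : Fin K → Fin d) :
    ∑ n : Fin N, ∑ a : Fin d, L n a * x n a
      ≤ ∑ n : Fin N, L n (z (c n))
        + η * ∑ n : Fin N, ∑ a : Fin d, (L n a) ^ 2 * x n a
        + K * Real.log d / η :=
  stmt_10_general d K N η hη c L hL x hx z
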